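/- arXiv:1505.06059 — 4 statements merged into one kernel-verified Lean document; each statement's English description precedes it below -/
import Mathlib

section
/- Let G = D_{2n} be the dihedral group of order 2n generated by elements a and b with ord(a) = n ≥ 2, ord(b) = 2 and bab⁻¹ = a⁻¹, and set G₀ = {ab, b}. Then B(G₀) is a saturated submonoid of the free abelian monoid F(G₀) (equivalently, B(G₀) is a Krull monoid) if and only if n is even. -/
/-- `S` is a product-one sequence over `G`: some ordering of its terms multiplies to `1`. -/
def IsProductOne {G : Type*} [Group G] (S : Multiset G) : Prop :=
  ∃ l : List G, (l : Multiset G) = S ∧ l.prod = 1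

/-- The set of products `π(S)` of all orderings of the terms of `S`. -/
def piSet {G : Type*} [Group G] (S : Multiset G) : Set G :=
  {g | ∃ l : List G, (l : Multiset G) = S ∧ l.prod = g}

/-- The set `Π(S)` of products of nontrivial subsequences of `S`. -/
def subseqProds {G : Type*} [Group G] (S : Multiset G) : Set G :=
  {g | ∃ T : Multiset G, T ≤ S ∧ T ≠ 0 ∧ g ∈ piSet T}

/-- `S` is product-one free. -/
def ProductOneFree {G : Type*} [Group G] (S : Multiset G) : Prop :=
  (1 : G) ∉ subseqProds S

/-- `S` is an atom of the monoid `B(G)` of product-one sequences: it is a nontrivial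
product-one sequence that is not the concatenation of two nontrivial product-one sequences. -/
def IsPOAtom {G : Type*} [Group G] (S : Multiset G) : Prop :=
  IsProductOne S ∧ S ≠ 0 ∧
    ∀ T₁ T₂ : Multiset G, IsProductOne T₁ → IsProductOne T₂ → T₁ + T₂ = S →
      T₁ = 0 ∨ T₂ = 0

/-- The large Davenport constant `D(G)`: the supremum of lengths of atoms of `B(G)`. -/
noncomputable def largeD (G : Type*) [Group G] : ℕ :=
  sSup {n : ℕ | ∃ S : Multiset G, IsPOAtom S ∧ Multiset.card S = n}

/-- The small Davenport constant `d(G)`: the supremum of lengths of product-one free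
sequences over `G`. -/
noncomputable def smalld (G : Type*) [Group G] : ℕ :=
  sSup {n : ℕ | ∃ S : Multiset G, ProductOneFree S ∧ Multiset.card S = n}

/-! With `x = ab` and `y = b`, both involutions with `xy = a`, every sequence over `G₀` is
`x^k y^m`. For even `n` the sign and the parity of the rotation index are homomorphisms
`D_{2n} → ℤ/2`; they show that `x^k y^m` is product-one exactly when `k` and `m` are both even,
a condition that passes to differences. For odd `n`, `x^n y^n` is product-one via `(xy)^n = a^n`
and so is `x^(n-1) y^(n-1)`, but their difference `xy` is not. -/

open Multiset DihedralGroup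

section ProductOne

variable {G : Type*} [Group G]

/-- Saturation of `B(G₀)` in `F(G₀)`: `T ≤ S` is divisibility in `F(G₀)`, and the quotient
`S - T` must again lie in `B(G₀)`. -/
def IsProductOneSaturated [DecidableEq G] (G₀ : Set G) : Prop :=
  ∀ S T : Multiset G, (∀ x ∈ S, x ∈ G₀) → (∀ x ∈ T, x ∈ G₀) →
    IsProductOne S → IsProductOne T → T ≤ S → IsProductOne (S - T)

theorem IsProductOne.add {S T : Multiset G} (hS : IsProductOne S) (hT : IsProductOne T) :
    IsProductOne (S + T) := by
  obtain ⟨l, rfl, hl⟩ := hS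
  obtain ⟨m, rfl, hm⟩ := hT
  exact ⟨l ++ m, rfl, by rw [List.prod_append, hl, hm, one_mul]⟩

theorem IsProductOne.prod_map_eq_one {M : Type*} [CommMonoid M] (f : G →* M)
    {S : Multiset G} (hS : IsProductOne S) : (S.map f).prod = 1 := by
  obtain ⟨l, rfl, hl⟩ := hS
  rw [Multiset.map_coe, Multiset.prod_coe, ← map_list_prod, hl, map_one]

theorem isProductOne_replicate {x : G} {k : ℕ} (h : x ^ k = 1) :
    IsProductOne (replicate k x) :=
  ⟨List.replicate k x, rfl, by rw [List.prod_replicate, h]⟩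

theorem isProductOne_nsmul_coe {l : List G} {k : ℕ} (h : l.prod ^ k = 1) :
    IsProductOne (k • (l : Multiset G)) := by
  have hcoe (j : ℕ) : ((List.replicate j l).flatten : Multiset G) = j • (l : Multiset G) := by
    induction j with
    | zero => rfl
    | succ j ih =>
      rw [List.replicate_succ, List.flatten_cons, ← Multiset.coe_add, ih, succ_nsmul']
  exact ⟨_, hcoe k, by rw [List.prod_flatten, List.map_replicate, List.prod_replicate, h]⟩

theorem isProductOne_pair_iff {x y : G} : IsProductOne {x, y} ↔ x * y = 1 := by
  refine ⟨fun ⟨l, hl, h⟩ => ?_, fun h => ⟨[x, y], rfl, by simpa using h⟩⟩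
  rcases List.perm_pair.mp (Multiset.coe_eq_coe.mp hl) with rfl | rfl
  · simpa using h
  · exact mul_eq_one_comm.mp (by simpa using h)

end ProductOne

theorem Multiset.eq_replicate_count_add_replicate_count {α : Type*} [DecidableEq α] {x y : α}
    (hxy : x ≠ y) {S : Multiset α} (hS : ∀ z ∈ S, z ∈ ({x, y} : Set α)) :
    S = replicate (S.count x) x + replicate (S.count y) y := by
  conv_lhs => rw [← filter_add_not (fun z => z = x) S]
  rw [filter_eq', ← filter_eq' S y]
  congr 1
  refine filter_congr fun z hz => ?_
  rcases hS z hz with rfl | rfl <;> simp_all [eq_comm]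

theorem ZMod.ofAdd_one_pow_eq_one_iff {k : ℕ} :
    Multiplicative.ofAdd (1 : ZMod 2) ^ k = 1 ↔ Even k := by
  rw [← ofAdd_nsmul, nsmul_one, ofAdd_eq_one, ZMod.natCast_eq_zero_iff_even]

namespace DihedralGroup

variable {n : ℕ}

theorem sr_pow_eq_one_of_even (i : ZMod n) {k : ℕ} (hk : Even k) : sr i ^ k = 1 :=
  orderOf_dvd_iff_pow_eq_one.mp (orderOf_sr i ▸ hk.two_dvd)

def sign (n : ℕ) : DihedralGroup n →* Multiplicative (ZMod 2) where
  toFun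
    | r _ => 1
    | sr _ => Multiplicative.ofAdd 1
  map_one' := rfl
  map_mul' := by
    rintro (i | i) (j | j) <;> simp only [r_mul_r, r_mul_sr, sr_mul_r, sr_mul_sr] <;> decide

@[simp]
theorem sign_sr (i : ZMod n) : sign n (sr i) = Multiplicative.ofAdd 1 := rfl

def indexParity (h : 2 ∣ n) : DihedralGroup n →* Multiplicative (ZMod 2) where
  toFun
    | r i => Multiplicative.ofAdd (ZMod.castHom h (ZMod 2) i)
    | sr i => Multiplicative.ofAdd (ZMod.castHom h (ZMod 2) i)
  map_one' := by rw [one_def]; exact congrArg Multiplicative.ofAdd (map_zero _)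
  map_mul' := by
    rintro (i | i) (j | j) <;>
      simp only [r_mul_r, r_mul_sr, sr_mul_r, sr_mul_sr, ← ofAdd_add, _root_.map_add,
        _root_.map_sub, CharTwo.sub_eq_add, add_comm]

@[simp]
theorem indexParity_sr (h : 2 ∣ n) (i : ZMod n) :
    indexParity h (sr i) = Multiplicative.ofAdd (ZMod.castHom h (ZMod 2) i) := rfl

theorem isProductOne_iff_even_count (hn : Even n) {S : Multiset (DihedralGroup n)}
    (hS : ∀ z ∈ S, z ∈ ({sr (-1), sr 0} : Set (DihedralGroup n))) :
    IsProductOne S ↔ Even (S.count (sr (-1))) ∧ Even (S.count (sr 0)) := by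
  have : Nontrivial (ZMod n) := ZMod.nontrivial_iff.mpr (by rintro rfl; simp at hn)
  have hxy : (sr (-1) : DihedralGroup n) ≠ sr 0 := by simp
  have hdecomp := eq_replicate_count_add_replicate_count hxy hS
  generalize S.count (sr (-1)) = k, S.count (sr 0) = m at hdecomp ⊢
  rw [hdecomp]
  refine ⟨fun h => ?_, fun ⟨hk, hm⟩ => ?_⟩
  · have hprod (f : DihedralGroup n →* Multiplicative (ZMod 2)) :
        f (sr (-1)) ^ k * f (sr 0) ^ m = 1 := by
      simpa using h.prod_map_eq_one f
    have hk : Even k := by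
      have hneg_one : ZMod.castHom hn.two_dvd (ZMod 2) (-1) = 1 := by
        rw [map_neg, map_one]; rfl
      simpa [hneg_one, ZMod.ofAdd_one_pow_eq_one_iff] using hprod (indexParity hn.two_dvd)
    have hkm : Even (k + m) := by
      simpa [← pow_add, ZMod.ofAdd_one_pow_eq_one_iff] using hprod (sign n)
    exact ⟨hk, (Nat.even_add.mp hkm).mp hk⟩
  · exact (isProductOne_replicate (sr_pow_eq_one_of_even _ hk)).add
      (isProductOne_replicate (sr_pow_eq_one_of_even _ hm))

theorem isProductOneSaturated_of_even (hn : Even n) :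
    IsProductOneSaturated ({sr (-1), sr 0} : Set (DihedralGroup n)) := by
  intro S T hS₀ hT₀ hS hT _
  have hST₀ : ∀ z ∈ S - T, z ∈ ({sr (-1), sr 0} : Set (DihedralGroup n)) :=
    fun z hz => hS₀ z (mem_of_le (Multiset.sub_le_self S T) hz)
  rw [isProductOne_iff_even_count hn hS₀] at hS
  rw [isProductOne_iff_even_count hn hT₀] at hT
  rw [isProductOne_iff_even_count hn hST₀, count_sub, count_sub]
  exact ⟨hS.1.tsub hT.1, hS.2.tsub hT.2⟩

theorem not_isProductOneSaturated_of_odd (hn : n ≠ 1) (hodd : Odd n) :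
    ¬ IsProductOneSaturated ({sr (-1), sr 0} : Set (DihedralGroup n)) := by
  have : Nontrivial (ZMod n) := ZMod.nontrivial_iff.mpr hn
  obtain ⟨m, rfl⟩ := hodd
  let P : Multiset (DihedralGroup (2 * m + 1)) := {sr (-1), sr 0}
  have hP₀ (k : ℕ) :
      ∀ z ∈ k • P, z ∈ ({sr (-1), sr 0} : Set (DihedralGroup (2 * m + 1))) :=
    fun z hz => by simpa [P] using mem_of_mem_nsmul hz
  have hS : IsProductOne ((2 * m + 1) • P) :=
    isProductOne_nsmul_coe (l := [sr (-1), sr 0]) (by simp [sr_mul_sr])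
  have hT : IsProductOne ((2 * m) • P) := by
    simp only [P, insert_eq_cons, nsmul_cons, nsmul_singleton]
    exact (isProductOne_replicate (sr_pow_eq_one_of_even _ (even_two_mul m))).add
      (isProductOne_replicate (sr_pow_eq_one_of_even _ (even_two_mul m)))
  have hP : ¬ IsProductOne P := by
    rw [isProductOne_pair_iff, sr_mul_sr, one_def, r.injEq]
    simp
  intro hsat
  refine hP ?_
  have := hsat _ _ (hP₀ _) (hP₀ _) hS hT (by rw [succ_nsmul]; exact le_add_right le_rfl)
  rwa [succ_nsmul, add_tsub_cancel_left] at this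

end DihedralGroup

/-- Let `G = D_{2n}` be the dihedral group with generators `a = r 1` of order `n ≥ 2` and
`b = sr 0` of order `2`, and let `G₀ = {a*b, b}`. Then `B(G₀)` is saturated in `F(G₀)`
(equivalently, `B(G₀)` is a Krull monoid) if and only if `n` is even. -/
theorem stmt8 (n : ℕ) (hn : 2 ≤ n) :
    (∀ S T : Multiset (DihedralGroup n),
        (∀ x ∈ S, x ∈ ({DihedralGroup.r 1 * DihedralGroup.sr 0, DihedralGroup.sr 0} :
          Set (DihedralGroup n))) →
        (∀ x ∈ T, x ∈ ({DihedralGroup.r 1 * DihedralGroup.sr 0, DihedralGroup.sr 0} :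
          Set (DihedralGroup n))) →
        IsProductOne S → IsProductOne T → T ≤ S → IsProductOne (S - T)) ↔
      Even n := by
  rw [r_mul_sr, zero_sub]
  change IsProductOneSaturated _ ↔ _
  refine ⟨fun hsat => ?_, isProductOneSaturated_of_even⟩
  by_contra hodd
  exact not_isProductOneSaturated_of_odd (by omega) (Nat.not_even_iff_odd.mp hodd) hsat
end

section
/- Let G be a finite group, N a normal subgroup of G, and k ∈ ℕ. Then d_k(G) ≤ d_{d_k(N)+1}(G/N). -/
/-- `S` is divisible in `F(G)` by a concatenation of `k` nontrivial product-one sequences. -/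
def DividesKProducts {G : Type*} [Group G] (k : ℕ) (S : Multiset G) : Prop :=
  ∃ f : Fin k → Multiset G,
    (∀ i, f i ≠ 0 ∧ IsProductOne (f i)) ∧ (∑ i, f i) ≤ S

/-- The small `k`-th Davenport constant `d_k(G)`. -/
noncomputable def smalldk (G : Type*) [Group G] (k : ℕ) : ℕ :=
  sSup {n : ℕ | ∃ S : Multiset G, ¬ DividesKProducts k S ∧ Multiset.card S = n}

/-- Every factorization of `S` into nontrivial product-one sequences has at most `k` factors. -/
def MaxFactLe {G : Type*} [Group G] (k : ℕ) (S : Multiset G) : Prop :=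
  ∀ (m : ℕ) (f : Fin m → Multiset G),
    (∀ i, f i ≠ 0 ∧ IsProductOne (f i)) → (∑ i, f i) = S → m ≤ k

/-- The large `k`-th Davenport constant `D_k(G)`. -/
noncomputable def largeDk (G : Type*) [Group G] (k : ℕ) : ℕ :=
  sSup {n : ℕ | ∃ S : Multiset G, IsProductOne S ∧ MaxFactLe k S ∧ Multiset.card S = n}

/-!
Let `m = d_k(N) + 1` and let `S` be a sequence over `G` longer than `d_m(G/N)`. Its image in
`G/N` contains `m` disjoint nontrivial product-one subsequences; these lift to disjoint blocks
`T₁, …, T_m` of `S`, each with an ordering whose product `xᵢ` lies in `N`. The sequence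
`x₁ ⋯ x_m` over `N` is longer than `d_k(N)`, so it contains `k` disjoint nontrivial product-one
subsequences, and concatenating the corresponding blocks yields `k` disjoint nontrivial
product-one subsequences of `S`. The suprema defining `d_k` are finite because any sequence of
length at least `k |G|` is divisible by `k` nontrivial product-one sequences.
-/

namespace Multiset

variable {α β : Type*}

theorem exists_le_map_eq_of_le_map {f : α → β} {S : Multiset α} {T : Multiset β}
    (h : T ≤ S.map f) : ∃ U ≤ S, U.map f = T := by
  induction S using Quotient.inductionOn
  induction T using Quotient.inductionOn
  obtain ⟨l, hperm, hsub⟩ := Multiset.coe_le.mp h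
  obtain ⟨L, hL, rfl⟩ := List.sublist_map_iff.mp hsub
  exact ⟨L, hL.subperm, Multiset.coe_eq_coe.mpr hperm⟩

theorem exists_coe_eq_of_map_eq_coe {f : α → β} {S : Multiset α} {l : List β}
    (h : S.map f = l) : ∃ L : List α, (L : Multiset α) = S ∧ L.map f = l := by
  classical
  induction l generalizing S with
  | nil => exact ⟨[], (by simpa using h : S = 0).symm, rfl⟩
  | cons b l ih =>
    obtain ⟨a, ha, rfl, hl⟩ := (Multiset.map_eq_cons f S l b).mpr h
    obtain ⟨L, hL, rfl⟩ := ih hl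
    exact ⟨a :: L, by rw [← Multiset.cons_coe, hL, Multiset.cons_erase ha], rfl⟩

theorem exists_lift_of_sum_le_map {f : α → β} {m : ℕ} {S : Multiset α} {T : Fin m → Multiset β}
    (h : ∑ i, T i ≤ S.map f) :
    ∃ U : Fin m → Multiset α, ∑ i, U i ≤ S ∧ ∀ i, (U i).map f = T i := by
  classical
  induction m generalizing S with
  | zero => exact ⟨finZeroElim, by simp, fun i => i.elim0⟩
  | succ m ih =>
    rw [Fin.sum_univ_succ] at h
    obtain ⟨U₀, hU₀, hU₀T⟩ := exists_le_map_eq_of_le_map (le_of_add_le_left h)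
    have hrest : ∑ i : Fin m, T i.succ ≤ (S - U₀).map f := by
      rwa [← add_tsub_cancel_of_le hU₀, map_add, hU₀T, add_le_add_iff_left] at h
    obtain ⟨U, hU, hUT⟩ := ih hrest
    refine ⟨Fin.cons U₀ U, ?_, Fin.cases hU₀T hUT⟩
    rw [Fin.sum_univ_succ, Fin.cons_zero]
    simp only [Fin.cons_succ]
    exact (add_le_add_right hU U₀).trans_eq (add_tsub_cancel_of_le hU₀)

theorem bind_le_bind_of_le {s t : Multiset α} (h : s ≤ t) (f : α → Multiset β) :
    s.bind f ≤ t.bind f := by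
  obtain ⟨u, rfl⟩ := exists_add_of_le h
  simp

theorem finset_sum_bind {ι : Type*} (s : Finset ι) (V : ι → Multiset α) (f : α → Multiset β) :
    (∑ i ∈ s, V i).bind f = ∑ i ∈ s, (V i).bind f :=
  map_sum ({ toFun := (·.bind f), map_zero' := zero_bind f, map_add' := (add_bind · · f) } :
    Multiset α →+ Multiset β) V s

end Multiset

section ProductOne

variable {G H : Type*} [Group G] [Group H]

theorem piSet_map (φ : G →* H) (S : Multiset G) : piSet (S.map φ) = φ '' piSet S := by
  ext y
  constructor
  · rintro ⟨l, hl, rfl⟩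
    obtain ⟨L, rfl, rfl⟩ := Multiset.exists_coe_eq_of_map_eq_coe hl.symm
    exact ⟨L.prod, ⟨L, rfl, rfl⟩, map_list_prod φ L⟩
  · rintro ⟨_, ⟨L, rfl, rfl⟩, rfl⟩
    exact ⟨L.map φ, by simp, (map_list_prod φ L).symm⟩

theorem mem_piSet_bind {ι : Type*} {V : Multiset ι} {T : ι → Multiset G} {x : ι → G}
    (hx : ∀ i, x i ∈ piSet (T i)) {y : G} (hy : y ∈ piSet (V.map x)) :
    y ∈ piSet (V.bind T) := by
  choose L hLT hLx using hx
  obtain ⟨w, hw, rfl⟩ := hy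
  obtain ⟨v, rfl, rfl⟩ := Multiset.exists_coe_eq_of_map_eq_coe hw.symm
  refine ⟨v.flatMap L, ?_, ?_⟩
  · rw [← Multiset.coe_bind]
    simp only [hLT]
  · rw [List.flatMap, List.prod_flatten, List.map_map]
    simp only [Function.comp_def, hLx]

theorem exists_isProductOne_of_prod_take_eq (l : List G) {a b : ℕ} (hab : a < b)
    (hb : b ≤ l.length) (h : (l.take a).prod = (l.take b).prod) :
    ∃ T ≤ (l : Multiset G), T ≠ 0 ∧ IsProductOne T ∧ Multiset.card T ≤ b := by
  have hsplit : l.take a ++ (l.take b).drop a = l.take b := by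
    simpa [List.take_take, min_eq_left hab.le] using List.take_append_drop a (l.take b)
  have hlen : ((l.take b).drop a).length = b - a := by
    simp only [List.length_drop, List.length_take]
    omega
  refine ⟨(l.take b).drop a, ((List.drop_sublist _ _).trans (List.take_sublist _ _)).subperm,
    ?_, ⟨_, rfl, ?_⟩, by simp only [Multiset.coe_card, hlen]; omega⟩
  · rw [Ne, Multiset.coe_eq_zero, ← List.length_eq_zero_iff, hlen]
    omega
  · rwa [← hsplit, List.prod_append, left_eq_mul] at h

theorem DividesKProducts.mono {k : ℕ} {S S' : Multiset G} (h : DividesKProducts k S)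
    (hS : S ≤ S') : DividesKProducts k S' :=
  let ⟨f, hf, hle⟩ := h
  ⟨f, hf, hle.trans hS⟩

theorem DividesKProducts.map {k : ℕ} {S : Multiset G} (h : DividesKProducts k S) (φ : G →* H) :
    DividesKProducts k (S.map φ) := by
  obtain ⟨f, hf, hle⟩ := h
  refine ⟨fun i => (f i).map φ, fun i => ⟨by simpa using (hf i).1, ?_⟩, ?_⟩
  · show 1 ∈ piSet ((f i).map φ)
    rw [piSet_map]
    exact ⟨1, (hf i).2, map_one φ⟩
  · show ∑ i, (f i).map φ ≤ S.map φ
    exact (map_sum (Multiset.mapAddMonoidHom φ) f _).symm.trans_le (Multiset.map_le_map hle)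

theorem DividesKProducts.sum_of_mem_piSet {ι : Type*} [Fintype ι] {k : ℕ}
    {T : ι → Multiset G} {x : ι → G} (h : DividesKProducts k (Finset.univ.val.map x))
    (hT : ∀ i, T i ≠ 0) (hx : ∀ i, x i ∈ piSet (T i)) : DividesKProducts k (∑ i, T i) := by
  obtain ⟨f, hf, hle⟩ := h
  obtain ⟨V, hV, hVf⟩ := Multiset.exists_lift_of_sum_le_map hle
  refine ⟨fun j => (V j).bind T, fun j => ⟨?_, ?_⟩, ?_⟩
  · obtain ⟨i, hi⟩ := Multiset.exists_mem_of_ne_zero fun h0 : V j = 0 =>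
      (hf j).1 (by rw [← hVf j, h0, Multiset.map_zero])
    obtain ⟨a, ha⟩ := Multiset.exists_mem_of_ne_zero (hT i)
    exact ne_of_mem_of_not_mem' (Multiset.mem_bind.mpr ⟨i, hi, ha⟩) (Multiset.notMem_zero a)
  · exact mem_piSet_bind hx (by rw [hVf j]; exact (hf j).2)
  · rw [← Multiset.finset_sum_bind, Finset.sum_eq_multiset_sum]
    exact Multiset.bind_le_bind_of_le hV T

theorem DividesKProducts.of_map_mk {N : Subgroup G} [N.Normal] {k m : ℕ}
    (hN : ∀ W : Multiset N, Multiset.card W = m → DividesKProducts k W) {S : Multiset G}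
    (h : DividesKProducts m (S.map (QuotientGroup.mk' N))) : DividesKProducts k S := by
  obtain ⟨f, hf, hle⟩ := h
  obtain ⟨T, hTS, hTf⟩ := Multiset.exists_lift_of_sum_le_map hle
  have hprod : ∀ i, ∃ x ∈ piSet (T i), x ∈ N := by
    intro i
    obtain ⟨x, hx, hx1⟩ : (1 : G ⧸ N) ∈ QuotientGroup.mk' N '' piSet (T i) := by
      rw [← piSet_map, hTf]
      exact (hf i).2
    exact ⟨x, hx, (QuotientGroup.eq_one_iff x).mp hx1⟩
  choose x hxT hxN using hprod
  have hW := (hN (Finset.univ.val.map fun i => ⟨x i, hxN i⟩) (by simp)).map N.subtype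
  rw [Multiset.map_map] at hW
  refine (hW.sum_of_mem_piSet (fun i h0 => (hf i).1 ?_) hxT).mono hTS
  rw [← hTf i, h0, Multiset.map_zero]

end ProductOne

section Finite

variable {G : Type*} [Group G] [Finite G]

-- Two of the `|G| + 1` prefix products of the sequence coincide.
theorem exists_isProductOne_le_of_card_le {S : Multiset G} (hS : Nat.card G ≤ Multiset.card S) :
    ∃ T ≤ S, T ≠ 0 ∧ IsProductOne T ∧ Multiset.card T ≤ Nat.card G := by
  have := Fintype.ofFinite G
  obtain ⟨l, rfl⟩ : ∃ l : List G, (l : Multiset G) = S := ⟨S.toList, S.coe_toList⟩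
  obtain ⟨a, ha, b, hb, hne, heq⟩ := Finset.exists_ne_map_eq_of_card_lt_of_maps_to
    (s := Finset.range (Nat.card G + 1)) (t := Finset.univ) (f := fun i => (l.take i).prod)
    (by simp [Nat.card_eq_fintype_card]) (fun _ _ => Finset.mem_coe.mpr (Finset.mem_univ _))
  rw [Finset.mem_range] at ha hb
  have hl : Nat.card G ≤ l.length := hS
  rcases hne.lt_or_gt with hab | hba
  · obtain ⟨T, hT, hT0, hT1, hTb⟩ := exists_isProductOne_of_prod_take_eq l hab (by omega) heq
    exact ⟨T, hT, hT0, hT1, by omega⟩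
  · obtain ⟨T, hT, hT0, hT1, hTa⟩ := exists_isProductOne_of_prod_take_eq l hba (by omega) heq.symm
    exact ⟨T, hT, hT0, hT1, by omega⟩

theorem dividesKProducts_of_mul_card_le {k : ℕ} {S : Multiset G}
    (hS : k * Nat.card G ≤ Multiset.card S) : DividesKProducts k S := by
  classical
  induction k generalizing S with
  | zero => exact ⟨finZeroElim, finZeroElim, by simp⟩
  | succ k ih =>
    obtain ⟨T, hTS, hT0, hT1, hTcard⟩ :=
      exists_isProductOne_le_of_card_le (le_of_add_le_right (Nat.succ_mul k _ ▸ hS))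
    obtain ⟨f, hf, hle⟩ := ih (S := S - T) (by
      rw [Multiset.card_sub hTS]
      rw [Nat.succ_mul] at hS
      omega)
    refine ⟨Fin.cons T f, Fin.cases ⟨hT0, hT1⟩ hf, ?_⟩
    rw [Fin.sum_univ_succ, Fin.cons_zero]
    simp only [Fin.cons_succ]
    exact (add_le_add_right hle T).trans_eq (add_tsub_cancel_of_le hTS)

theorem le_smalldk {k : ℕ} {S : Multiset G} (h : ¬ DividesKProducts k S) :
    Multiset.card S ≤ smalldk G k := by
  refine le_csSup ⟨k * Nat.card G, ?_⟩ ⟨S, h, rfl⟩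
  rintro _ ⟨S', hS', rfl⟩
  by_contra hlt
  exact hS' (dividesKProducts_of_mul_card_le (not_le.mp hlt).le)

theorem dividesKProducts_of_smalldk_lt {k : ℕ} {S : Multiset G}
    (h : smalldk G k < Multiset.card S) : DividesKProducts k S :=
  by_contra fun h' => h.not_ge (le_smalldk h')

end Finite

theorem stmt10_general {G : Type*} [Group G] [Finite G] (N : Subgroup G) [N.Normal]
    (k : ℕ) :
    smalldk G k ≤ smalldk (G ⧸ N) (smalldk ↥N k + 1) := by
  refine csSup_le' ?_
  rintro _ ⟨S, hS, rfl⟩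
  rw [← Multiset.card_map (QuotientGroup.mk' N) S]
  refine le_smalldk fun h => hS (h.of_map_mk fun W hW => dividesKProducts_of_smalldk_lt ?_)
  omega

/-- For a normal subgroup `N` of a finite group `G` and `k ≥ 1`,
`d_k(G) ≤ d_{d_k(N)+1}(G/N)`. -/
theorem stmt10 {G : Type*} [Group G] [Finite G] (N : Subgroup G) [N.Normal]
    (k : ℕ) (hk : 1 ≤ k) :
    smalldk G k ≤ smalldk (G ⧸ N) (smalldk ↥N k + 1) :=
  stmt10_general N k
end

section
/- Let G be a finite abelian group and k ∈ ℕ. Then D_k(G) = 1 + d_k(G). -/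
/-! If `S` contains no `k` disjoint nontrivial zero-sum subsequences, then `S` with `-σ(S)`
appended is a zero-sum sequence that does not split into `k + 1` nontrivial zero-sum factors:
the factors avoiding the new term would lie in `S`. Conversely, deleting a term `g` from a
zero-sum sequence with no such splitting leaves a sequence without `k` disjoint zero-sum
subsequences, since otherwise their complement, which contains `g`, would be one more factor.
Both suprema are attained because, by comparing prefix sums, every sequence of length at least
`|G|` has a nonempty zero-sum subsequence of length at most `|G|`, so every sequence of length
`k|G|` is divisible by `k` of them. -/

/-- `S` is a zero-sum sequence over the additive abelian group `G`. -/
def IsZeroSum {G : Type*} [AddCommGroup G] (S : Multiset G) : Prop :=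
  S.sum = 0

/-- `S` is divisible in `F(G)` by a concatenation of `k` nontrivial zero-sum sequences. -/
def ZDividesKSums {G : Type*} [AddCommGroup G] (k : ℕ) (S : Multiset G) : Prop :=
  ∃ f : Fin k → Multiset G,
    (∀ i, f i ≠ 0 ∧ IsZeroSum (f i)) ∧ (∑ i, f i) ≤ S

/-- The small `k`-th Davenport constant `d_k(G)` of an additive abelian group. -/
noncomputable def zsmalldk (G : Type*) [AddCommGroup G] (k : ℕ) : ℕ :=
  sSup {n : ℕ | ∃ S : Multiset G, ¬ ZDividesKSums k S ∧ Multiset.card S = n}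

/-- Every factorization of `S` into nontrivial zero-sum sequences has at most `k` factors. -/
def ZMaxFactLe {G : Type*} [AddCommGroup G] (k : ℕ) (S : Multiset G) : Prop :=
  ∀ (m : ℕ) (f : Fin m → Multiset G),
    (∀ i, f i ≠ 0 ∧ IsZeroSum (f i)) → (∑ i, f i) = S → m ≤ k

/-- The large `k`-th Davenport constant `D_k(G)` of an additive abelian group. -/
noncomputable def zlargeDk (G : Type*) [AddCommGroup G] (k : ℕ) : ℕ :=
  sSup {n : ℕ | ∃ S : Multiset G, IsZeroSum S ∧ ZMaxFactLe k S ∧ Multiset.card S = n}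

open Multiset

theorem List.sum_drop_take_eq_zero {M : Type*} [AddLeftCancelMonoid M] {L : List M} {i j : ℕ}
    (hij : i ≤ j) (h : (L.take i).sum = (L.take j).sum) : ((L.take j).drop i).sum = 0 := by
  have hsplit := congrArg List.sum (List.take_append_drop i (L.take j))
  rwa [List.sum_append, List.take_take, min_eq_left hij, h, add_eq_left] at hsplit

section

variable {G : Type*} [AddCommGroup G]

theorem exists_le_isZeroSum_card_le [Finite G] (S : Multiset G) (h : Nat.card G ≤ card S) :
    ∃ T ≤ S, T ≠ 0 ∧ IsZeroSum T ∧ card T ≤ Nat.card G := by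
  set L := S.toList
  have hL : L.length = card S := length_toList S
  let prefixSum : Fin (Nat.card G + 1) → G := fun i => (L.take i).sum
  have h_not_inj : ¬ Function.Injective prefixSum := fun h_inj => by
    simpa using Nat.card_le_card_of_injective prefixSum h_inj
  obtain ⟨i, j, hsum, hne⟩ := Function.not_injective_iff.mp h_not_inj
  wlog hlt : i < j generalizing i j
  · exact this j i hsum.symm hne.symm (lt_of_le_of_ne (not_lt.mp hlt) hne.symm)
  have hj := j.isLt
  refine ⟨((L.take j).drop i : List G), ?_, ?_, L.sum_drop_take_eq_zero hlt.le hsum, ?_⟩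
  · rw [← coe_toList S, coe_le]
    exact ((List.drop_sublist _ _).trans (List.take_sublist _ _)).subperm
  · simp only [ne_eq, coe_eq_zero, List.drop_eq_nil_iff, List.length_take]
    omega
  · simp only [coe_card, List.length_drop, List.length_take]
    omega

theorem isZeroSum_sum {ι : Type*} (s : Finset ι) {f : ι → Multiset G}
    (hf : ∀ i ∈ s, IsZeroSum (f i)) : IsZeroSum (∑ i ∈ s, f i) := by
  rw [IsZeroSum, Multiset.sum_sum]
  exact Finset.sum_eq_zero hf

theorem IsZeroSum.of_add_left {S T : Multiset G} (h : IsZeroSum (S + T)) (hS : IsZeroSum S) :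
    IsZeroSum T := by
  rwa [IsZeroSum, sum_add, hS, zero_add] at h

namespace ZDividesKSums

variable {k n : ℕ} {S T : Multiset G}

theorem mono (hkn : k ≤ n) (hST : S ≤ T) (h : ZDividesKSums n S) : ZDividesKSums k T := by
  obtain ⟨r, rfl⟩ := Nat.exists_eq_add_of_le hkn
  obtain ⟨f, hf, hfS⟩ := h
  refine ⟨fun i => f (Fin.castAdd r i), fun i => hf _, le_trans ?_ (hfS.trans hST)⟩
  rw [Fin.sum_univ_add]
  exact le_self_add

theorem add_left (hT : T ≠ 0) (hT' : IsZeroSum T) (h : ZDividesKSums k S) :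
    ZDividesKSums (k + 1) (T + S) := by
  obtain ⟨f, hf, hfS⟩ := h
  refine ⟨Fin.cons T f, Fin.cases ⟨hT, hT'⟩ hf, ?_⟩
  rw [Fin.sum_cons]
  exact add_le_add_right hfS T

end ZDividesKSums

theorem not_zDividesKSums_zero {k : ℕ} (hk : 0 < k) : ¬ ZDividesKSums k (0 : Multiset G) := by
  rintro ⟨f, hf, hf0⟩
  refine (hf ⟨0, hk⟩).1 (le_zero.mp (le_trans ?_ hf0))
  exact Finset.single_le_sum (fun i _ => zero_le (f i)) (Finset.mem_univ _)

theorem zDividesKSums_of_mul_card_le [Finite G] (k : ℕ) (S : Multiset G)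
    (h : k * Nat.card G ≤ card S) : ZDividesKSums k S := by
  induction k generalizing S with
  | zero => exact ⟨Fin.elim0, fun i => i.elim0, by simp⟩
  | succ k ih =>
    obtain ⟨T, hTS, hT0, hT, hTcard⟩ := exists_le_isZeroSum_card_le S (by nlinarith)
    obtain ⟨R, rfl⟩ := Multiset.le_iff_exists_add.mp hTS
    rw [card_add] at h
    exact (ih R (by nlinarith)).add_left hT0 hT

theorem zDividesKSums_of_sum_eq_cons {n : ℕ} {g : G} {S : Multiset G}
    (f : Fin (n + 1) → Multiset G) (hf : ∀ i, f i ≠ 0 ∧ IsZeroSum (f i))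
    (hfS : ∑ i, f i = g ::ₘ S) : ZDividesKSums n S := by
  obtain ⟨i₀, -, hg⟩ := mem_sum.mp (hfS ▸ mem_cons_self g S)
  obtain ⟨R, hR⟩ := exists_cons_of_mem hg
  refine ⟨fun i => f (i₀.succAbove i), fun i => hf _, ?_⟩
  rw [Fin.sum_univ_succAbove f i₀, hR, cons_add, cons_inj_right] at hfS
  exact hfS ▸ le_add_self

theorem zMaxFactLe_cons_neg_sum {k : ℕ} {S : Multiset G} (hS : ¬ ZDividesKSums k S) :
    ZMaxFactLe k (-S.sum ::ₘ S) := by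
  intro m f hf hfS
  by_contra! hkm
  obtain ⟨n, rfl⟩ := Nat.exists_eq_add_of_lt hkm
  exact hS ((zDividesKSums_of_sum_eq_cons f hf hfS).mono (by omega) le_rfl)

theorem not_zMaxFactLe_of_lt {k : ℕ} {S T : Multiset G} (hS : IsZeroSum S)
    (hT : ZDividesKSums k T) (hTS : T < S) : ¬ ZMaxFactLe k S := by
  intro hmax
  obtain ⟨f, hf, hfT⟩ := hT
  obtain ⟨R, hR⟩ := Multiset.le_iff_exists_add.mp (hfT.trans hTS.le)
  have hR0 : R ≠ 0 := by
    rintro rfl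
    rw [add_zero] at hR
    exact hTS.not_ge (hR ▸ hfT)
  have hRsum : IsZeroSum R := (hR ▸ hS).of_add_left (isZeroSum_sum _ fun i _ => (hf i).2)
  have := hmax (k + 1) (Fin.cons R f) (Fin.cases ⟨hR0, hRsum⟩ hf)
    (by rw [Fin.sum_cons, hR, add_comm])
  omega

end

/-- For a finite abelian group `G` and `k ≥ 1`, `D_k(G) = 1 + d_k(G)`. -/
theorem stmt16 {G : Type*} [AddCommGroup G] [Finite G] (k : ℕ) (hk : 1 ≤ k) :
    zlargeDk G k = 1 + zsmalldk G k := by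
  classical
  rw [zlargeDk, zsmalldk]
  set A := {n : ℕ | ∃ S : Multiset G, ¬ ZDividesKSums k S ∧ card S = n}
  have hA_bdd : BddAbove A := ⟨k * Nat.card G, by
    rintro _ ⟨S, hS, rfl⟩
    by_contra! h
    exact hS (zDividesKSums_of_mul_card_le k S h.le)⟩
  have hA_nonempty : A.Nonempty := ⟨0, 0, not_zDividesKSums_zero hk, rfl⟩
  obtain ⟨S, hS, hS_card⟩ := Nat.sSup_mem hA_nonempty hA_bdd
  refine IsGreatest.csSup_eq ⟨⟨-S.sum ::ₘ S, by simp [IsZeroSum], zMaxFactLe_cons_neg_sum hS,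
    by rw [card_cons, hS_card, add_comm]⟩, ?_⟩
  rintro _ ⟨T, hT, hTmax, rfl⟩
  obtain rfl | ⟨g, hg⟩ := empty_or_exists_mem T
  · simp
  have hT_pos : 0 < card T := card_pos_iff_exists_mem.mpr ⟨g, hg⟩
  have hT_erase : card T - 1 ∈ A :=
    ⟨T.erase g, fun h => not_zMaxFactLe_of_lt hT h (erase_lt.mpr hg) hTmax,
      by rw [card_erase_of_mem hg, Nat.pred_eq_sub_one]⟩
  have := le_csSup hA_bdd hT_erase
  omega
end

section
/- Let G be a finite group and let e(G) = max{ord(g) : g ∈ G} be the maximal order of an element of G. Then there exist constants C ∈ ℕ₀ and K ∈ ℕ such that for all k ≥ K the large k-th Davenport constant satisfies D_k(G) = k·e(G) + C. -/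
/-!
Write `e = e(G)`. The sequence `g^{k e}` for `g` of order `e` has only factorizations into powers
`g^{n e}`, so `D_k(G) ≥ k e`. Conversely, take an ordering of a product-one sequence `S` with
product `1`, and a term `g` occurring more than `|G| (ord g - 1)` times in `S`. By pigeonhole,
`ord g` of these occurrences have the same prefix product `v` in front of them; deleting them
multiplies the total product by a conjugate of `g^{-ord g} = 1`, so `S = R · g^{ord g}` with `R`
product-one. Every long product-one sequence has such a term, and peeling off `g^{ord g}` lowers
the maximal number of factors by one: this bounds `D_k(G)` and gives `D_{k+1}(G) ≤ D_k(G) + e`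
for large `k`. So `D_k(G) - k e` is eventually a nonincreasing sequence of naturals, hence
eventually constant.
-/

open Multiset

section ProductOne

variable {G : Type*} [Group G]

lemma isProductOne_replicate_iff {g : G} {n : ℕ} :
    IsProductOne (replicate n g) ↔ orderOf g ∣ n := by
  constructor
  · rintro ⟨l, hl, hprod⟩
    rw [← coe_replicate, coe_eq_coe, List.perm_replicate] at hl
    rwa [hl, List.prod_replicate, ← orderOf_dvd_iff_pow_eq_one] at hprod
  · rintro ⟨m, rfl⟩
    exact ⟨List.replicate _ g, coe_replicate _ _, by
      rw [List.prod_replicate, pow_mul, pow_orderOf_eq_one, one_pow]⟩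

lemma MaxFactLe.eq_zero {S : Multiset G} (h : MaxFactLe 0 S) (hS : IsProductOne S) : S = 0 := by
  by_contra hS0
  exact absurd (h 1 (fun _ => S) (fun _ => ⟨hS0, hS⟩) (by simp)) (by omega)

lemma MaxFactLe.of_add {k : ℕ} {R P : Multiset G} (h : MaxFactLe (k + 1) (R + P))
    (hP : P ≠ 0) (hPone : IsProductOne P) : MaxFactLe k R := fun m f hf hsum =>
  Nat.le_of_succ_le_succ <|
    h (m + 1) (Fin.cons P f) (Fin.cases ⟨hP, hPone⟩ hf) (by rw [Fin.sum_cons, hsum, add_comm])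

lemma MaxFactLe.of_add_replicate_orderOf [Finite G] {k : ℕ} {R : Multiset G} {g : G}
    (h : MaxFactLe (k + 1) (R + replicate (orderOf g) g)) : MaxFactLe k R :=
  h.of_add (by rw [Ne, ← card_eq_zero, card_replicate]; exact (orderOf_pos g).ne')
    (isProductOne_replicate_iff.2 dvd_rfl)

lemma maxFactLe_replicate_mul_orderOf [Finite G] (g : G) (k : ℕ) :
    MaxFactLe k (replicate (k * orderOf g) g) := by
  intro m f hf hsum
  have hfactor (i : Fin m) : orderOf g ≤ card (f i) := by
    obtain ⟨n, -, hn⟩ := le_replicate_iff.1 <|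
      hsum ▸ Finset.single_le_sum (fun j _ => zero_le (f j)) (Finset.mem_univ i)
    obtain ⟨hne, hone⟩ := hf i
    rw [hn] at hne hone ⊢
    rw [card_replicate]
    exact Nat.le_of_dvd (Nat.pos_of_ne_zero fun hn0 => hne (by rw [hn0, replicate_zero]))
      (isProductOne_replicate_iff.1 hone)
  have hcard : ∑ i, card (f i) = k * orderOf g := by
    rw [← Multiset.card_sum, hsum, card_replicate]
  refine Nat.le_of_mul_le_mul_right ?_ (orderOf_pos g)
  calc m * orderOf g = ∑ _i : Fin m, orderOf g := by simp
    _ ≤ k * orderOf g := hcard ▸ Finset.sum_le_sum fun i _ => hfactor i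

end ProductOne

section MaxOrder

noncomputable def maxOrder (G : Type*) [Group G] : ℕ := sSup (Set.range (orderOf : G → ℕ))

variable {G : Type*} [Group G] [Finite G]

lemma bddAbove_range_orderOf : BddAbove (Set.range (orderOf : G → ℕ)) :=
  ⟨Nat.card G, by rintro _ ⟨g, rfl⟩; exact orderOf_le_card⟩

lemma orderOf_le_maxOrder (g : G) : orderOf g ≤ maxOrder G :=
  le_csSup bddAbove_range_orderOf ⟨g, rfl⟩

lemma exists_orderOf_eq_maxOrder : ∃ g : G, orderOf g = maxOrder G :=
  Nat.sSup_mem (Set.range_nonempty _) bddAbove_range_orderOf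

lemma maxOrder_pos : 0 < maxOrder G :=
  (orderOf_pos (1 : G)).trans_le (orderOf_le_maxOrder 1)

end MaxOrder

section Extraction

variable {G : Type*} [Group G] [DecidableEq G]

/-- `prefixCount g l v` is the number of positions `i` with `l[i] = g` and `(l.take i).prod = v`. -/
def prefixCount (g : G) : List G → G → ℕ
  | [], _ => 0
  | x :: t, v => (if x = g ∧ v = 1 then 1 else 0) + prefixCount g t (x⁻¹ * v)

lemma sum_prefixCount [Fintype G] (g : G) (l : List G) :
    ∑ v : G, prefixCount g l v = l.count g := by
  induction l with
  | nil => simp [prefixCount]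
  | cons x t ih =>
    have hshift : ∑ v : G, prefixCount g t (x⁻¹ * v) = t.count g :=
      ih ▸ Fintype.sum_bijective _ (Group.mulLeft_bijective x⁻¹) _ _ fun _ => rfl
    simp only [prefixCount, Finset.sum_add_distrib, hshift, List.count_cons]
    by_cases hx : x = g <;> simp [hx, add_comm]

lemma exists_eq_add_replicate_of_le_prefixCount (g : G) :
    ∀ (l : List G) (m : ℕ) (v : G), m ≤ prefixCount g l v →
      ∃ r : List G, (l : Multiset G) = r + replicate m g ∧
        r.prod = v * g⁻¹ ^ m * v⁻¹ * l.prod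
  | [], m, v, h => by
    obtain rfl : m = 0 := by simpa [prefixCount] using h
    exact ⟨[], by simp, by simp⟩
  | x :: t, 0, v, _ => ⟨x :: t, by simp, by group⟩
  | x :: t, m + 1, v, h => by
    by_cases hc : x = g ∧ v = 1
    · obtain ⟨rfl, rfl⟩ := hc
      obtain ⟨r, hr, hprod⟩ :=
        exists_eq_add_replicate_of_le_prefixCount x t m x⁻¹ (by simp [prefixCount] at h; omega)
      refine ⟨r, ?_, ?_⟩
      · rw [← cons_coe, hr, replicate_succ, add_cons]
      · rw [hprod, List.prod_cons]
        group
    · obtain ⟨r, hr, hprod⟩ :=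
        exists_eq_add_replicate_of_le_prefixCount g t (m + 1) (x⁻¹ * v)
          (by simpa [prefixCount, hc] using h)
      refine ⟨x :: r, ?_, ?_⟩
      · rw [← cons_coe, hr, ← cons_coe, cons_add]
      · rw [List.prod_cons, List.prod_cons, hprod]
        group

variable [Fintype G]

lemma IsProductOne.exists_eq_add_replicate_orderOf {S : Multiset G} (hS : IsProductOne S) {g : G}
    (hg : Fintype.card G * (orderOf g - 1) < S.count g) :
    ∃ R, S = R + replicate (orderOf g) g ∧ IsProductOne R := by
  obtain ⟨l, rfl, hprod⟩ := hS
  obtain ⟨v, -, hv⟩ : ∃ v ∈ Finset.univ, orderOf g - 1 < prefixCount g l v :=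
    Finset.exists_lt_of_sum_lt (by simpa [sum_prefixCount] using hg)
  obtain ⟨r, hr, hrprod⟩ :=
    exists_eq_add_replicate_of_le_prefixCount g l (orderOf g) v (by have := orderOf_pos g; omega)
  refine ⟨r, hr, r, rfl, ?_⟩
  rw [hrprod, hprod, inv_pow, pow_orderOf_eq_one]
  group

lemma IsProductOne.exists_eq_add_replicate_orderOf_of_card_lt {S : Multiset G}
    (hS : IsProductOne S) (hcard : Fintype.card G ^ 2 * maxOrder G < card S) :
    ∃ g R, S = R + replicate (orderOf g) g ∧ IsProductOne R := by
  obtain ⟨g, -, hg⟩ : ∃ g ∈ Finset.univ, Fintype.card G * maxOrder G < S.count g :=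
    Finset.exists_lt_of_sum_lt <| by
      rwa [sum_count_eq_card fun _ _ => Finset.mem_univ _, Finset.sum_const, Finset.card_univ,
        smul_eq_mul, ← mul_assoc, ← sq]
  have hord : Fintype.card G * (orderOf g - 1) < S.count g :=
    lt_of_le_of_lt (Nat.mul_le_mul_left _ (by have := orderOf_le_maxOrder g; omega)) hg
  exact ⟨g, hS.exists_eq_add_replicate_orderOf hord⟩

end Extraction

section LargeDk

variable {G : Type*} [Group G] [Fintype G]

lemma card_le_of_maxFactLe {k : ℕ} {S : Multiset G} (hS : IsProductOne S) (h : MaxFactLe k S) :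
    card S ≤ Fintype.card G ^ 2 * maxOrder G + k * maxOrder G := by
  classical
  induction k generalizing S with
  | zero => simp [h.eq_zero hS]
  | succ k ih =>
    by_contra! hlong
    obtain ⟨g, R, rfl, hR⟩ :=
      hS.exists_eq_add_replicate_orderOf_of_card_lt ((Nat.le_add_right _ _).trans_lt hlong)
    have := ih hR h.of_add_replicate_orderOf
    have := orderOf_le_maxOrder g
    rw [card_add, card_replicate, add_one_mul] at hlong
    omega

lemma bddAbove_largeDk (k : ℕ) :
    BddAbove {n | ∃ S : Multiset G, IsProductOne S ∧ MaxFactLe k S ∧ card S = n} :=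
  ⟨_, by rintro _ ⟨S, hS, h, rfl⟩; exact card_le_of_maxFactLe hS h⟩

lemma card_le_largeDk {k : ℕ} {S : Multiset G} (hS : IsProductOne S) (h : MaxFactLe k S) :
    card S ≤ largeDk G k :=
  le_csSup (bddAbove_largeDk k) ⟨S, hS, h, rfl⟩

lemma mul_maxOrder_le_largeDk (k : ℕ) : k * maxOrder G ≤ largeDk G k := by
  obtain ⟨g, hg⟩ := exists_orderOf_eq_maxOrder (G := G)
  simpa [hg] using card_le_largeDk (isProductOne_replicate_iff.2 (dvd_mul_left _ k))
    (maxFactLe_replicate_mul_orderOf g k)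

lemma exists_card_eq_largeDk (k : ℕ) :
    ∃ S : Multiset G, IsProductOne S ∧ MaxFactLe k S ∧ card S = largeDk G k :=
  Nat.sSup_mem (s := {n | ∃ S : Multiset G, IsProductOne S ∧ MaxFactLe k S ∧ card S = n})
    ⟨_, _, isProductOne_replicate_iff.2 (dvd_mul_left _ k),
      maxFactLe_replicate_mul_orderOf (1 : G) k, rfl⟩ (bddAbove_largeDk k)

lemma largeDk_succ_le {k : ℕ} (hk : Fintype.card G ^ 2 * maxOrder G ≤ k) :
    largeDk G (k + 1) ≤ largeDk G k + maxOrder G := by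
  classical
  obtain ⟨S, hS, h, hcard⟩ := exists_card_eq_largeDk (G := G) (k + 1)
  have hlong : Fintype.card G ^ 2 * maxOrder G < card S := calc
    _ < k + 1 := Nat.lt_succ_of_le hk
    _ ≤ (k + 1) * maxOrder G := Nat.le_mul_of_pos_right _ maxOrder_pos
    _ ≤ card S := hcard ▸ mul_maxOrder_le_largeDk (k + 1)
  obtain ⟨g, R, rfl, hR⟩ := hS.exists_eq_add_replicate_orderOf_of_card_lt hlong
  have := card_le_largeDk hR h.of_add_replicate_orderOf
  have := orderOf_le_maxOrder g
  rw [← hcard, card_add, card_replicate]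
  omega

end LargeDk

lemma exists_forall_ge_eq_of_succ_le {c : ℕ → ℕ} {K₀ : ℕ}
    (h : ∀ k ≥ K₀, c (k + 1) ≤ c k) :
    ∃ K, ∀ k ≥ K, c k = c K := by
  obtain ⟨n, hn⟩ := WellFoundedLT.antitone_chain_condition
    (antitone_nat_of_succ_le (f := fun n => c (K₀ + n)) fun n =>
      h (K₀ + n) (Nat.le_add_right _ _))
  refine ⟨K₀ + n, fun k hk => ?_⟩
  obtain ⟨m, rfl⟩ := Nat.exists_eq_add_of_le (le_of_add_le_left hk)
  exact (hn m (by omega)).symm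

/-- Let `G` be a finite group and `e(G) = max {ord g : g ∈ G}`. Then there exist constants
`C ∈ ℕ₀` and `K ∈ ℕ` such that `D_k(G) = k·e(G) + C` for all `k ≥ K`. -/
theorem stmt19 {G : Type*} [Group G] [Finite G] :
    ∃ (C K : ℕ), 1 ≤ K ∧ ∀ k : ℕ, K ≤ k →
      largeDk G k = k * sSup (Set.range (orderOf : G → ℕ)) + C := by
  cases nonempty_fintype G
  obtain ⟨K, hK⟩ :=
    exists_forall_ge_eq_of_succ_le (c := fun k => largeDk G k - k * maxOrder G) fun k hk => by
      have := largeDk_succ_le (G := G) hk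
      have := mul_maxOrder_le_largeDk (G := G) k
      simp only [add_one_mul]
      omega
  refine ⟨largeDk G K - K * maxOrder G, K + 1, K.succ_pos, fun k hk => ?_⟩
  have := hK k (by omega)
  have := mul_maxOrder_le_largeDk (G := G) k
  change largeDk G k = k * maxOrder G + _
  omega
end
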